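/- Let R be a commutative integral domain with identity, Γ a discrete group, G an ample Hausdorff groupoid, and c : G → Γ a continuous cocycle such that there is a dense subset X ⊆ G⁰ with the property that the group ring R(c⁻¹(e) ∩ G_x^x) has no zero-divisors and only trivial units for all x ∈ X. If (m, n) ∈ A_R(G)_g × A_R(G)_{g⁻¹} is a normaliser of D_R(G), then supp(m) is a compact open bisection of G contained in c⁻¹(g), and supp(n) = supp(m)⁻¹. -/

import Mathlib

structure GroupoidStruct (G : Type*) where
  src : G → G
  rng : G → G
  inv : G → G
  mul : G → G → G
  rng_src : ∀ a, rng (src a) = src a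
  src_src : ∀ a, src (src a) = src a
  src_rng : ∀ a, src (rng a) = rng a
  rng_rng : ∀ a, rng (rng a) = rng a
  src_inv : ∀ a, src (inv a) = rng a
  rng_inv : ∀ a, rng (inv a) = src a
  src_mul : ∀ a b, src a = rng b → src (mul a b) = src b
  rng_mul : ∀ a b, src a = rng b → rng (mul a b) = rng a
  mul_assoc' : ∀ a b c, src a = rng b → src b = rng c →
    mul (mul a b) c = mul a (mul b c)
  unit_mul : ∀ a, mul (rng a) a = a
  mul_unit : ∀ a, mul a (src a) = a
  inv_mul : ∀ a, mul (inv a) a = src a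
  mul_inv : ∀ a, mul a (inv a) = rng a
  inv_inv : ∀ a, inv (inv a) = a

namespace GroupoidStruct

variable {G : Type*} (𝒢 : GroupoidStruct G)

/-- The unit space `G⁰` of the groupoid. -/
def units : Set G := {x | 𝒢.src x = x}

/-- The set product `UV` of two subsets of the groupoid. -/
def setMul (U V : Set G) : Set G :=
  {η | ∃ a ∈ U, ∃ b ∈ V, 𝒢.src a = 𝒢.rng b ∧ 𝒢.mul a b = η}

/-- A bisection: a set on which the source and range maps are injective. -/
def IsBisection (U : Set G) : Prop := Set.InjOn 𝒢.src U ∧ Set.InjOn 𝒢.rng U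

/-- A cocycle into a group: a groupoid homomorphism. -/
def IsCocycle {Γ : Type*} [Group Γ] (c : G → Γ) : Prop :=
  ∀ a b, 𝒢.src a = 𝒢.rng b → c (𝒢.mul a b) = c a * c b

end GroupoidStruct

/-- A Hausdorff étale topological groupoid (the Hausdorff condition is imposed via a
`T2Space` instance on `G`). -/
structure EtaleGroupoid (G : Type*) [TopologicalSpace G] extends GroupoidStruct G where
  continuous_src : Continuous src
  continuous_rng : Continuous rng
  continuous_inv : Continuous inv
  continuousOn_mul : ContinuousOn (fun p : G × G => mul p.1 p.2) {p | src p.1 = rng p.2}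
  etale_src : IsLocalHomeomorph src
  etale_rng : IsLocalHomeomorph rng

/-- An ample groupoid: an étale groupoid whose unit space has a basis of compact open sets. -/
structure AmpleGroupoid (G : Type*) [TopologicalSpace G] extends EtaleGroupoid G where
  ample : ∀ x, src x = x → ∀ U : Set G, IsOpen U → x ∈ U →
    ∃ K : Set G, IsCompact K ∧ IsOpen K ∧ x ∈ K ∧ K ⊆ U ∧ ∀ y ∈ K, src y = y

/-- The convolution product on `R`-valued functions on the groupoid `G`:
`(f * g)(η) = ∑_{αβ = η} f(α) g(β)`. -/
noncomputable def conv {G : Type*} (𝒢 : GroupoidStruct G) {R : Type*} [CommRing R]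
    (f g : G → R) : G → R :=
  fun η => ∑ᶠ (p : G × G) (_ : 𝒢.src p.1 = 𝒢.rng p.2 ∧ 𝒢.mul p.1 p.2 = η), f p.1 * g p.2

/-- The carrier of the Steinberg algebra `A_R(G)`: locally constant compactly supported
`R`-valued functions on `G`. -/
def SteinbergSet {G : Type*} [TopologicalSpace G] (𝒢 : GroupoidStruct G)
    (R : Type*) [CommRing R] : Set (G → R) :=
  {f | IsLocallyConstant f ∧ IsCompact (Function.support f)}

/-- The diagonal subalgebra `D_R(G)`: elements of `A_R(G)` supported on the unit space. -/
def DiagSet {G : Type*} [TopologicalSpace G] (𝒢 : GroupoidStruct G)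
    (R : Type*) [CommRing R] : Set (G → R) :=
  {f | f ∈ SteinbergSet 𝒢 R ∧ Function.support f ⊆ GroupoidStruct.units 𝒢}

/-- `f` is homogeneous of degree `g` for the grading induced by the cocycle `c`,
i.e. `supp f ⊆ c⁻¹(g)`. -/
def InGrade {G : Type*} {Γ : Type*} [Group Γ] {R : Type*} [CommRing R]
    (c : G → Γ) (g : Γ) (f : G → R) : Prop :=
  ∀ η, f η ≠ 0 → c η = g

/-- A normaliser of the diagonal `D_R(G)` in `A_R(G)`: a pair `(m, n)` with
`m D n ∪ n D m ⊆ D`, `mnm = m` and `nmn = n`. -/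
def IsNormaliser {G : Type*} [TopologicalSpace G] (𝒢 : GroupoidStruct G)
    (R : Type*) [CommRing R] (m n : G → R) : Prop :=
  m ∈ SteinbergSet 𝒢 R ∧ n ∈ SteinbergSet 𝒢 R ∧
  (∀ d ∈ DiagSet 𝒢 R, conv 𝒢 m (conv 𝒢 d n) ∈ DiagSet 𝒢 R ∧
      conv 𝒢 n (conv 𝒢 d m) ∈ DiagSet 𝒢 R) ∧
  conv 𝒢 m (conv 𝒢 n m) = m ∧ conv 𝒢 n (conv 𝒢 m n) = n

/-- The involution `f*(η) = (f(η⁻¹))*` on `R`-valued functions on the groupoid. -/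
def starF {G : Type*} (𝒢 : GroupoidStruct G) {R : Type*} [CommRing R] [StarRing R]
    (f : G → R) : G → R :=
  fun η => star (f (𝒢.inv η))

/-- The group `c⁻¹(e) ∩ G_x^x`: elements of the isotropy group at `x` on which the
cocycle `c` takes the value `e`. -/
def IsoSet {G : Type*} (𝒢 : GroupoidStruct G) {Γ : Type*} [Group Γ] (c : G → Γ)
    (x : G) : Set G :=
  {η | c η = 1 ∧ 𝒢.src η = x ∧ 𝒢.rng η = x}

/-- The group ring `R(c⁻¹(e) ∩ G_x^x)` (realised as finitely supported functions on `G`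
supported in `c⁻¹(e) ∩ G_x^x` with convolution) has no zero-divisors and only trivial units
(units of the form `u·g` for `u` a unit of `R` and `g` a group element). -/
def GroupRingNice {G : Type*} (𝒢 : GroupoidStruct G) {Γ : Type*} [Group Γ] (c : G → Γ)
    (x : G) (R : Type*) [CommRing R] : Prop :=
  (∀ f g : G → R, (Function.support f).Finite → (Function.support g).Finite →
      Function.support f ⊆ IsoSet 𝒢 c x → Function.support g ⊆ IsoSet 𝒢 c x →
      conv 𝒢 f g = 0 → f = 0 ∨ g = 0) ∧
  (∀ f g : G → R, (Function.support f).Finite → (Function.support g).Finite →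
      Function.support f ⊆ IsoSet 𝒢 c x → Function.support g ⊆ IsoSet 𝒢 c x →
      conv 𝒢 f g = Set.indicator {x} (fun _ => (1 : R)) →
      conv 𝒢 g f = Set.indicator {x} (fun _ => (1 : R)) →
      ∃ (u : R) (η : G), IsUnit u ∧ η ∈ IsoSet 𝒢 c x ∧
        f = Set.indicator {η} (fun _ => u))


/-!
Write `δ_t` for the point mass at `t`. Testing the normaliser condition against indicators of
small compact open sets of units shows that `m δ_x n` and `n δ_x m` are supported in `G⁰` for
every unit `x`, and so are `m n` and `n m`. With `m n m = m` and associativity of convolution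
for functions with finite range fibers this gives `(m δ_x n)(r q) = δ_x(s q)` and
`(n δ_w m)(s q) = δ_w(r q)` for `q ∈ supp m`: points of `supp m` with the same range have the
same source, and conversely. For `q ∈ supp m` the elements `δ_{q⁻¹} m δ_{s q}` and
`δ_{s q} n δ_q` of the group ring of `c⁻¹(e) ∩ G_{s q}^{s q}` are then inverse to each other, so
when `s q ∈ X` the first is a trivial unit and `q` is the only point of `supp m` with source
`s q`. As `s` is open and `X` is dense, `s` is injective on the open set `supp m`, hence so is
`r`, and `(m δ_{s q} n)(r q) = 1` forces `n(q⁻¹) ≠ 0`.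
-/

open Function Set

namespace GroupoidStruct

variable {G : Type*} (𝒢 : GroupoidStruct G)

lemma src_mem_units (a : G) : 𝒢.src a ∈ 𝒢.units := 𝒢.src_src a

lemma rng_mem_units (a : G) : 𝒢.rng a ∈ 𝒢.units := 𝒢.src_rng a

variable {𝒢} {p q q' x : G}

lemma rng_eq_self_of_mem_units (hx : x ∈ 𝒢.units) : 𝒢.rng x = x := by
  have h := 𝒢.rng_src x
  rwa [show 𝒢.src x = x from hx] at h

lemma unit_mul_of_rng_eq (h : 𝒢.rng q = x) : 𝒢.mul x q = q := h ▸ 𝒢.unit_mul q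

lemma mul_unit_of_src_eq (h : 𝒢.src p = x) : 𝒢.mul p x = p := h ▸ 𝒢.mul_unit p

lemma inv_mul_cancel_left (h : 𝒢.src p = 𝒢.rng q) : 𝒢.mul (𝒢.inv p) (𝒢.mul p q) = q := by
  rw [← 𝒢.mul_assoc' _ _ _ (𝒢.src_inv p) h, 𝒢.inv_mul, unit_mul_of_rng_eq h.symm]

lemma mul_inv_cancel_left (h : 𝒢.rng p = 𝒢.rng q) : 𝒢.mul p (𝒢.mul (𝒢.inv p) q) = q := by
  rw [← 𝒢.mul_assoc' _ _ _ (𝒢.rng_inv p).symm (by rw [𝒢.src_inv, h]), 𝒢.mul_inv,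
    unit_mul_of_rng_eq h.symm]

lemma mul_inv_cancel_right (h : 𝒢.src p = 𝒢.rng q) : 𝒢.mul (𝒢.mul p q) (𝒢.inv q) = p := by
  rw [𝒢.mul_assoc' _ _ _ h (𝒢.rng_inv q).symm, 𝒢.mul_inv, mul_unit_of_src_eq h]

lemma mul_left_cancel (h : 𝒢.src p = 𝒢.rng q) (h' : 𝒢.src p = 𝒢.rng q')
    (he : 𝒢.mul p q = 𝒢.mul p q') : q = q' := by
  rw [← inv_mul_cancel_left h, he, inv_mul_cancel_left h']

lemma eq_inv_of_mul_eq_rng (h : 𝒢.src p = 𝒢.rng q) (he : 𝒢.mul p q = 𝒢.rng p) :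
    q = 𝒢.inv p := by
  rw [← inv_mul_cancel_left h, he, mul_unit_of_src_eq (𝒢.src_inv p)]

lemma inv_eq_self_of_mem_units (hx : x ∈ 𝒢.units) : 𝒢.inv x = x := by
  have hr := rng_eq_self_of_mem_units hx
  refine (eq_inv_of_mul_eq_rng (hx.trans hr.symm) ?_).symm
  rw [mul_unit_of_src_eq hx, hr]

lemma mul_inv_rev (h : 𝒢.src p = 𝒢.rng q) :
    𝒢.inv (𝒢.mul p q) = 𝒢.mul (𝒢.inv q) (𝒢.inv p) := by
  have hqp : 𝒢.src (𝒢.inv q) = 𝒢.rng (𝒢.inv p) := by rw [𝒢.src_inv, 𝒢.rng_inv, h]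
  refine (eq_inv_of_mul_eq_rng ?_ ?_).symm
  · rw [𝒢.src_mul _ _ h, 𝒢.rng_mul _ _ hqp, 𝒢.rng_inv]
  · rw [← 𝒢.mul_assoc' _ _ _ (by rw [𝒢.src_mul _ _ h, 𝒢.rng_inv]) hqp,
      mul_inv_cancel_right h, 𝒢.mul_inv, 𝒢.rng_mul _ _ h]

lemma inv_mul_mul_inv_mul (hx : 𝒢.rng x = 𝒢.rng p) (hq : 𝒢.rng q = 𝒢.rng p) :
    𝒢.mul (𝒢.inv (𝒢.mul (𝒢.inv p) x)) (𝒢.mul (𝒢.inv p) q) = 𝒢.mul (𝒢.inv x) q := by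
  have hpx : 𝒢.src (𝒢.inv p) = 𝒢.rng x := by rw [𝒢.src_inv, hx]
  rw [mul_inv_rev hpx, 𝒢.inv_inv, 𝒢.mul_assoc' _ _ _ (by rw [𝒢.src_inv, hx])
    (by rw [𝒢.rng_mul _ _ (by rw [𝒢.src_inv, hq]), 𝒢.rng_inv]), mul_inv_cancel_left hq.symm]

variable {R : Type*} [CommRing R] {a b d : G → R} {η : G}

lemma conv_apply (a b : G → R) (η : G) :
    conv 𝒢 a b η = ∑ᶠ p ∈ {p | 𝒢.rng p = 𝒢.rng η}, a p * b (𝒢.mul (𝒢.inv p) η) := by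
  have hpairs : {z : G × G | 𝒢.src z.1 = 𝒢.rng z.2 ∧ 𝒢.mul z.1 z.2 = η}
      = (fun p => (p, 𝒢.mul (𝒢.inv p) η)) '' {p | 𝒢.rng p = 𝒢.rng η} := by
    ext ⟨p, q⟩
    constructor
    · rintro ⟨h, rfl⟩
      exact ⟨p, (𝒢.rng_mul _ _ h).symm, Prod.ext rfl (inv_mul_cancel_left h)⟩
    · rintro ⟨p, hp, he⟩
      obtain ⟨rfl, rfl⟩ := Prod.mk.inj he
      exact ⟨by rw [𝒢.rng_mul _ _ (by rw [𝒢.src_inv, hp]), 𝒢.rng_inv], mul_inv_cancel_left hp⟩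
  change ∑ᶠ z ∈ {z : G × G | 𝒢.src z.1 = 𝒢.rng z.2 ∧ 𝒢.mul z.1 z.2 = η}, a z.1 * b z.2 = _
  rw [hpairs, finsum_mem_image fun p _ p' _ h => congrArg Prod.fst h]

lemma support_conv_subset (a b : G → R) :
    support (conv 𝒢 a b) ⊆ 𝒢.setMul (support a) (support b) := by
  intro η hη
  by_contra hnot
  refine hη ((conv_apply a b η).trans (finsum_mem_of_eqOn_zero fun p hp => ?_))
  by_contra hne
  have hcomp : 𝒢.src p = 𝒢.rng (𝒢.mul (𝒢.inv p) η) := by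
    rw [𝒢.rng_mul _ _ (by rw [𝒢.src_inv]; exact hp), 𝒢.rng_inv]
  exact hnot ⟨p, left_ne_zero_of_mul hne, _, right_ne_zero_of_mul hne, hcomp,
    mul_inv_cancel_left hp⟩

lemma conv_apply_eq_sum (T : Finset G) (hT : ∀ p ∈ T, 𝒢.rng p = 𝒢.rng η)
    (hsupp : ∀ p, 𝒢.rng p = 𝒢.rng η → a p * b (𝒢.mul (𝒢.inv p) η) ≠ 0 → p ∈ T) :
    conv 𝒢 a b η = ∑ p ∈ T, a p * b (𝒢.mul (𝒢.inv p) η) := by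
  rw [conv_apply]
  refine finsum_mem_eq_sum_of_inter_support_eq _ (Set.ext fun p => ?_)
  exact ⟨fun ⟨hp, hne⟩ => ⟨hsupp p hp hne, hne⟩, fun ⟨hp, hne⟩ => ⟨hT p hp, hne⟩⟩

lemma diag_conv_apply (hd : support d ⊆ 𝒢.units) (b : G → R) (η : G) :
    conv 𝒢 d b η = d (𝒢.rng η) * b η := by
  rw [conv_apply_eq_sum {𝒢.rng η}, Finset.sum_singleton,
    inv_eq_self_of_mem_units (𝒢.rng_mem_units η), 𝒢.unit_mul]
  · simp [𝒢.rng_rng]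
  · intro p hp hne
    rw [Finset.mem_singleton, ← hp, rng_eq_self_of_mem_units (hd (left_ne_zero_of_mul hne))]

lemma conv_diag_apply (hd : support d ⊆ 𝒢.units) (a : G → R) (η : G) :
    conv 𝒢 a d η = a η * d (𝒢.src η) := by
  rw [conv_apply_eq_sum {η}, Finset.sum_singleton, 𝒢.inv_mul]
  · simp
  · intro p hp hne
    have hu : 𝒢.mul (𝒢.inv p) η ∈ 𝒢.units := hd (right_ne_zero_of_mul hne)
    have hsp : 𝒢.src p = 𝒢.mul (𝒢.inv p) η := by
      rw [← rng_eq_self_of_mem_units hu, 𝒢.rng_mul _ _ (by rw [𝒢.src_inv, hp]), 𝒢.rng_inv]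
    rw [Finset.mem_singleton, ← mul_inv_cancel_left hp, ← hsp, 𝒢.mul_unit]

variable (𝒢) in
def FiniteRngFibers (a : G → R) : Prop := ∀ y, (support a ∩ 𝒢.rng ⁻¹' {y}).Finite

lemma finiteRngFibers_of_finite (h : (support a).Finite) : 𝒢.FiniteRngFibers a :=
  fun _ => h.subset inter_subset_left

lemma FiniteRngFibers.conv (ha : 𝒢.FiniteRngFibers a) (hb : 𝒢.FiniteRngFibers b) :
    𝒢.FiniteRngFibers (conv 𝒢 a b) := by
  intro y
  refine ((ha y).biUnion fun p _ => (hb (𝒢.src p)).image (𝒢.mul p)).subset ?_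
  rintro η ⟨hη, rfl⟩
  obtain ⟨p, hp, q, hq, hpq, rfl⟩ := support_conv_subset a b hη
  exact mem_biUnion ⟨hp, (𝒢.rng_mul _ _ hpq).symm⟩ ⟨q, ⟨hq, hpq.symm⟩, rfl⟩

lemma conv_apply_inv_mul_eq_sum (c : G → R) (hη : 𝒢.rng η = 𝒢.rng p) (X : Finset G)
    (hX : ∀ x ∈ X, 𝒢.rng x = 𝒢.rng p)
    (hbX : ∀ q, b q ≠ 0 → 𝒢.rng q = 𝒢.src p → 𝒢.mul p q ∈ X) :
    conv 𝒢 b c (𝒢.mul (𝒢.inv p) η)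
      = ∑ x ∈ X, b (𝒢.mul (𝒢.inv p) x) * c (𝒢.mul (𝒢.inv x) η) := by
  classical
  have hrng : ∀ x, 𝒢.rng x = 𝒢.rng p → 𝒢.rng (𝒢.mul (𝒢.inv p) x) = 𝒢.src p := fun x hx => by
    rw [𝒢.rng_mul _ _ (by rw [𝒢.src_inv, hx]), 𝒢.rng_inv]
  rw [conv_apply_eq_sum (X.image (𝒢.mul (𝒢.inv p))), Finset.sum_image]
  · exact Finset.sum_congr rfl fun x hx => by rw [inv_mul_mul_inv_mul (hX x hx) hη]
  · intro x hx x' hx' he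
    exact mul_left_cancel (by rw [𝒢.src_inv, hX x hx]) (by rw [𝒢.src_inv, hX x' hx']) he
  · simp only [Finset.mem_image]
    rintro _ ⟨x, hx, rfl⟩
    rw [hrng x (hX x hx), hrng η hη]
  · intro q hq hne
    rw [hrng η hη] at hq
    exact Finset.mem_image.mpr ⟨_, hbX q (left_ne_zero_of_mul hne) hq,
      inv_mul_cancel_left hq.symm⟩

lemma conv_assoc (ha : 𝒢.FiniteRngFibers a) (hb : 𝒢.FiniteRngFibers b) (c : G → R) :
    conv 𝒢 (conv 𝒢 a b) c = conv 𝒢 a (conv 𝒢 b c) := by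
  classical
  funext η
  set A := (ha (𝒢.rng η)).toFinset
  set X := A.biUnion fun p => ((hb (𝒢.src p)).toFinset).image (𝒢.mul p)
  have hA : ∀ p, p ∈ A ↔ a p ≠ 0 ∧ 𝒢.rng p = 𝒢.rng η := by simp [A]
  have hAX : ∀ p ∈ A, ∀ q, b q ≠ 0 → 𝒢.rng q = 𝒢.src p → 𝒢.mul p q ∈ X := fun p hp q hq hqp =>
    Finset.mem_biUnion.mpr ⟨p, hp, Finset.mem_image_of_mem _ (by simp [hq, hqp])⟩
  have hX : ∀ x ∈ X, 𝒢.rng x = 𝒢.rng η := by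
    simp only [X, Finset.mem_biUnion, Finset.mem_image, Finite.mem_toFinset]
    rintro _ ⟨p, hp, q, ⟨-, hq⟩, rfl⟩
    rw [𝒢.rng_mul _ _ hq.symm, ((hA p).mp hp).2]
  calc conv 𝒢 (conv 𝒢 a b) c η
      = ∑ x ∈ X, conv 𝒢 a b x * c (𝒢.mul (𝒢.inv x) η) := by
        refine conv_apply_eq_sum X hX fun x hx hne => ?_
        obtain ⟨p, hp, q, hq, hpq, rfl⟩ := support_conv_subset a b (left_ne_zero_of_mul hne)
        have hpA : p ∈ A := (hA p).mpr ⟨hp, (𝒢.rng_mul _ _ hpq).symm.trans hx⟩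
        exact hAX p hpA q hq hpq.symm
    _ = ∑ x ∈ X, ∑ p ∈ A, a p * b (𝒢.mul (𝒢.inv p) x) * c (𝒢.mul (𝒢.inv x) η) := by
        refine Finset.sum_congr rfl fun x hx => ?_
        rw [conv_apply_eq_sum A (fun p hp => ((hA p).mp hp).2.trans (hX x hx).symm)
          fun p hp hne => (hA p).mpr ⟨left_ne_zero_of_mul hne, hp.trans (hX x hx)⟩, Finset.sum_mul]
    _ = ∑ p ∈ A, a p * conv 𝒢 b c (𝒢.mul (𝒢.inv p) η) := by
        rw [Finset.sum_comm]
        refine Finset.sum_congr rfl fun p hp => ?_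
        have hpη := ((hA p).mp hp).2
        rw [conv_apply_inv_mul_eq_sum c hpη.symm X (fun x hx => (hX x hx).trans hpη.symm)
          (hAX p hp), Finset.mul_sum]
        simp only [mul_assoc]
    _ = conv 𝒢 a (conv 𝒢 b c) η :=
        (conv_apply_eq_sum A (fun p hp => ((hA p).mp hp).2) fun p hp hne =>
          (hA p).mpr ⟨left_ne_zero_of_mul hne, hp⟩).symm

variable (R) in
noncomputable def delta (t : G) : G → R := Set.indicator {t} fun _ => 1

lemma delta_apply_of_ne {t : G} (h : η ≠ t) : delta R t η = 0 :=
  indicator_of_notMem (show η ∉ ({t} : Set G) from h) _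

lemma delta_apply_self (t : G) : delta R t t = 1 := indicator_of_mem (mem_singleton t) _

lemma delta_apply_eq_delta_apply {t t' η' : G} (h : η = t ↔ η' = t') :
    delta R t η = delta R t' η' := by
  by_cases hη : η = t
  · rw [delta, delta, indicator_of_mem (mem_singleton_iff.mpr hη),
      indicator_of_mem (mem_singleton_iff.mpr (h.mp hη))]
  · rw [delta_apply_of_ne hη, delta_apply_of_ne (mt h.mpr hη)]

lemma support_delta_subset (t : G) : support (delta R t) ⊆ {t} := support_indicator_subset

lemma support_delta_subset_units (hx : x ∈ 𝒢.units) : support (delta R x) ⊆ 𝒢.units :=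
  (support_delta_subset x).trans (singleton_subset_iff.mpr hx)

lemma finiteRngFibers_delta (t : G) : 𝒢.FiniteRngFibers (delta R t) :=
  finiteRngFibers_of_finite ((finite_singleton t).subset (support_delta_subset t))

open scoped Classical in
lemma delta_conv_apply (t : G) (b : G → R) (η : G) :
    conv 𝒢 (delta R t) b η = if 𝒢.rng η = 𝒢.rng t then b (𝒢.mul (𝒢.inv t) η) else 0 := by
  have hT : ∀ p, delta R t p * b (𝒢.mul (𝒢.inv p) η) ≠ 0 → p = t := fun p hne =>
    support_delta_subset t (left_ne_zero_of_mul hne)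
  split_ifs with h
  · rw [conv_apply_eq_sum {t} (by simp [h]) fun p _ hne => by simp [hT p hne],
      Finset.sum_singleton, delta, indicator_of_mem (mem_singleton t), one_mul]
  · rw [conv_apply_eq_sum ∅ (by simp) fun p hp hne => absurd (hT p hne ▸ hp).symm h,
      Finset.sum_empty]

lemma delta_conv_apply_mul {t : G} (h : 𝒢.src t = 𝒢.rng p) (b : G → R) :
    conv 𝒢 (delta R t) b (𝒢.mul t p) = b p := by
  rw [delta_conv_apply, if_pos (𝒢.rng_mul _ _ h), inv_mul_cancel_left h]

lemma delta_conv_delta {t t' : G} (h : 𝒢.src t = 𝒢.rng t') :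
    conv 𝒢 (delta R t) (delta R t') = delta R (𝒢.mul t t') := by
  funext η
  rw [delta_conv_apply]
  split_ifs with hη
  · have hiff : 𝒢.mul (𝒢.inv t) η = t' ↔ η = 𝒢.mul t t' :=
      ⟨fun h' => by rw [← h', mul_inv_cancel_left hη.symm], fun h' => by
        rw [h', inv_mul_cancel_left h]⟩
    exact delta_apply_eq_delta_apply hiff
  · refine (delta_apply_of_ne fun h' => hη ?_).symm
    rw [h', 𝒢.rng_mul _ _ h]

lemma delta_inv_conv_diag_conv_delta (hd : support d ⊆ 𝒢.units) (t : G) :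
    conv 𝒢 (delta R (𝒢.inv t)) (conv 𝒢 d (delta R t)) = d (𝒢.rng t) • delta R (𝒢.src t) := by
  funext η
  rw [delta_conv_apply, 𝒢.rng_inv, 𝒢.inv_inv, Pi.smul_apply, smul_eq_mul]
  split_ifs with hη
  · rw [diag_conv_apply hd, 𝒢.rng_mul _ _ hη.symm]
    have hiff : 𝒢.mul t η = t ↔ η = 𝒢.src t := by
      refine ⟨fun h' => mul_left_cancel hη.symm (𝒢.rng_src t).symm ?_, fun h' => by
        rw [h', 𝒢.mul_unit]⟩
      rw [h', 𝒢.mul_unit]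
    exact congrArg _ (delta_apply_eq_delta_apply hiff)
  · rw [delta_apply_of_ne fun h' => hη (by rw [h', 𝒢.rng_src]), mul_zero]

lemma delta_conv_diag_conv_delta (hd : support d ⊆ 𝒢.units) {u : G} (hu : u ∈ 𝒢.units) :
    conv 𝒢 (delta R u) (conv 𝒢 d (delta R u)) = d u • delta R u := by
  have h := delta_inv_conv_diag_conv_delta hd u
  rwa [inv_eq_self_of_mem_units hu, rng_eq_self_of_mem_units hu, show 𝒢.src u = u from hu] at h

variable (𝒢) in
/-- For `a` of degree `c q`, an element of the group ring of `c⁻¹(e) ∩ G_{s q}^{s q}`. -/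
noncomputable def isotropyLeft (a : G → R) (q : G) : G → R :=
  conv 𝒢 (delta R (𝒢.inv q)) (conv 𝒢 a (delta R (𝒢.src q)))

variable (𝒢) in
/-- For `b` of degree `(c q)⁻¹`, an element of the group ring of `c⁻¹(e) ∩ G_{s q}^{s q}`. -/
noncomputable def isotropyRight (b : G → R) (q : G) : G → R :=
  conv 𝒢 (delta R (𝒢.src q)) (conv 𝒢 b (delta R q))

lemma isotropyLeft_apply_inv_mul (hr : 𝒢.rng p = 𝒢.rng q) (hs : 𝒢.src p = 𝒢.src q) :
    𝒢.isotropyLeft a q (𝒢.mul (𝒢.inv q) p) = a p := by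
  rw [isotropyLeft, delta_conv_apply_mul (by rw [𝒢.src_inv, hr]),
    conv_diag_apply (support_delta_subset_units (𝒢.src_mem_units q)), hs, delta_apply_self,
    mul_one]

lemma finite_support_of_subset_isoSet {Γ : Type*} [Group Γ] {c : G → Γ}
    (ha : 𝒢.FiniteRngFibers a) (h : support a ⊆ IsoSet 𝒢 c x) : (support a).Finite :=
  (ha x).subset fun _ hη => ⟨hη, (h hη).2.2⟩

section Grading

variable {Γ : Type*} [Group Γ] {c : G → Γ} {g : Γ}

lemma support_isotropyLeft_subset (hc : 𝒢.IsCocycle c) (ha : InGrade c g a) (hq : c q = g) :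
    support (𝒢.isotropyLeft a q) ⊆ IsoSet 𝒢 c (𝒢.src q) := by
  intro η hη
  rw [mem_support, isotropyLeft, delta_conv_apply, 𝒢.rng_inv, 𝒢.inv_inv] at hη
  split_ifs at hη with hr
  · have hcomp : 𝒢.src q = 𝒢.rng η := hr.symm
    rw [conv_diag_apply (support_delta_subset_units (𝒢.src_mem_units q))] at hη
    have hs : 𝒢.src η = 𝒢.src q := by
      rw [← 𝒢.src_mul _ _ hcomp]
      exact support_delta_subset _ (right_ne_zero_of_mul hη)
    have hcη := ha _ (left_ne_zero_of_mul hη)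
    rw [hc _ _ hcomp, hq, mul_eq_left] at hcη
    exact ⟨hcη, hs, hr⟩
  · exact absurd rfl hη

lemma support_isotropyRight_subset (hc : 𝒢.IsCocycle c) (hb : InGrade c g⁻¹ b) (hq : c q = g) :
    support (𝒢.isotropyRight b q) ⊆ IsoSet 𝒢 c (𝒢.src q) := by
  intro η hη
  rw [mem_support, isotropyRight, delta_conv_apply, 𝒢.rng_src] at hη
  split_ifs at hη with hr
  · rw [inv_eq_self_of_mem_units (𝒢.src_mem_units q), unit_mul_of_rng_eq hr] at hη
    obtain ⟨p, hp, q', hq', hpq, rfl⟩ := support_conv_subset b (delta R q) hη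
    obtain rfl : q' = q := support_delta_subset q hq'
    refine ⟨?_, 𝒢.src_mul _ _ hpq, hr⟩
    rw [hc _ _ hpq, hb p hp, hq, inv_mul_cancel]
  · exact absurd rfl hη

end Grading

lemma conv_diag_conv_apply_congr {d d' : G → R} (hd : support d ⊆ 𝒢.units)
    (hd' : support d' ⊆ 𝒢.units) (a b : G → R) {ζ : G}
    (hdd' : ∀ p, a p ≠ 0 → 𝒢.rng p = 𝒢.rng ζ → d (𝒢.src p) = d' (𝒢.src p)) :
    conv 𝒢 a (conv 𝒢 d b) ζ = conv 𝒢 a (conv 𝒢 d' b) ζ := by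
  rw [conv_apply, conv_apply]
  refine finsum_mem_congr rfl fun p hp => ?_
  have hr : 𝒢.rng (𝒢.mul (𝒢.inv p) ζ) = 𝒢.src p := by
    rw [𝒢.rng_mul _ _ (by rw [𝒢.src_inv]; exact hp), 𝒢.rng_inv]
  rw [diag_conv_apply hd, diag_conv_apply hd', hr]
  by_cases hap : a p = 0
  · rw [hap, zero_mul, zero_mul]
  · rw [hdd' p hap hp]

end GroupoidStruct

section Topology

open GroupoidStruct

variable {G : Type*} [TopologicalSpace G] {R : Type*} [CommRing R]

lemma IsLocallyConstant.isClopen_support {f : G → R} (hf : IsLocallyConstant f) :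
    IsClopen (support f) :=
  (hf.isClopen_fiber 0).compl

lemma indicator_mem_diagSet [T2Space G] (𝒢 : GroupoidStruct G) {V : Set G} (hVc : IsCompact V)
    (hVo : IsOpen V) (hVu : V ⊆ 𝒢.units) : (V.indicator fun _ => (1 : R)) ∈ DiagSet 𝒢 R := by
  have hlc : IsLocallyConstant (V.indicator fun _ => (1 : R)) :=
    (LocallyConstant.indicator 1 ⟨hVc.isClosed, hVo⟩).isLocallyConstant
  exact ⟨⟨hlc, hVc.of_isClosed_subset hlc.isClopen_support.isClosed support_indicator_subset⟩,
    support_indicator_subset.trans hVu⟩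

lemma EtaleGroupoid.finiteRngFibers [T1Space G] (ℰ : EtaleGroupoid G) {a : G → R}
    (ha : IsCompact (support a)) : ℰ.FiniteRngFibers a := fun _ =>
  (ha.inter_right (isClosed_singleton.preimage ℰ.continuous_rng)).finite
    (ℰ.etale_rng.isLocalHomeomorphOn.isDiscrete_of_image
      ((subsingleton_singleton.anti (image_subset_iff.mpr inter_subset_right)).isDiscrete))

lemma EtaleGroupoid.exists_ne_src_eq_mem [T2Space G] (ℰ : EtaleGroupoid G) {U X : Set G}
    (hU : IsOpen U) (hX : ℰ.units ⊆ closure X) {q q' : G} (hq : q ∈ U) (hq' : q' ∈ U)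
    (hne : q ≠ q') (hs : ℰ.src q = ℰ.src q') :
    ∃ a ∈ U, ∃ b ∈ U, a ≠ b ∧ ℰ.src a = ℰ.src b ∧ ℰ.src a ∈ X := by
  obtain ⟨O, O', hO, hO', hqO, hq'O', hOO'⟩ := t2_separation hne
  have hW : IsOpen (ℰ.src '' (U ∩ O) ∩ ℰ.src '' (U ∩ O')) :=
    (ℰ.etale_src.isOpenMap _ (hU.inter hO)).inter (ℰ.etale_src.isOpenMap _ (hU.inter hO'))
  obtain ⟨_, ⟨⟨a, ⟨haU, haO⟩, rfl⟩, b, ⟨hbU, hbO'⟩, hab⟩, haX⟩ :=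
    mem_closure_iff.mp (hX (ℰ.src_mem_units q)) _ hW
      ⟨⟨q, ⟨hq, hqO⟩, rfl⟩, q', ⟨hq', hq'O'⟩, hs.symm⟩
  exact ⟨a, haU, b, hbU, fun h => disjoint_left.mp hOO' haO (h ▸ hbO'), hab.symm, haX⟩

lemma AmpleGroupoid.exists_isCompact_isOpen [T1Space G] (𝒜 : AmpleGroupoid G) {A B : Set G}
    (hA : A.Finite) (hB : B.Finite) (hAu : A ⊆ 𝒜.units) (hAB : Disjoint A B) :
    ∃ V, IsCompact V ∧ IsOpen V ∧ V ⊆ 𝒜.units ∧ A ⊆ V ∧ Disjoint V B := by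
  have hK : ∀ x ∈ A, ∃ K : Set G, IsCompact K ∧ IsOpen K ∧ x ∈ K ∧ K ⊆ Bᶜ ∧
      ∀ y ∈ K, 𝒜.src y = y := fun x hx =>
    𝒜.ample x (hAu hx) Bᶜ hB.isClosed.isOpen_compl (disjoint_left.mp hAB hx)
  choose! K hKc hKo hxK hKB hKu using hK
  exact ⟨⋃ x ∈ A, K x, hA.isCompact_biUnion hKc, isOpen_biUnion hKo,
    iUnion₂_subset hKu, fun x hx => mem_biUnion hx (hxK x hx),
    subset_compl_iff_disjoint_right.mp (iUnion₂_subset hKB)⟩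

end Topology

namespace IsNormaliser

open GroupoidStruct

variable {G : Type*} {R : Type*} [CommRing R] {m n : G → R}

lemma swap [TopologicalSpace G] {𝒢 : GroupoidStruct G} (h : IsNormaliser 𝒢 R m n) :
    IsNormaliser 𝒢 R n m :=
  ⟨h.2.1, h.1, fun d hd => (h.2.2.1 d hd).symm, h.2.2.2.2, h.2.2.2.1⟩

variable [TopologicalSpace G] [T2Space G] {𝒜 : AmpleGroupoid G} {q q' x : G}

lemma finiteRngFibers (h : IsNormaliser 𝒜.toGroupoidStruct R m n) :
    𝒜.FiniteRngFibers m :=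
  𝒜.toEtaleGroupoid.finiteRngFibers h.1.2

lemma support_conv_indicator_conv_subset_units (h : IsNormaliser 𝒜.toGroupoidStruct R m n)
    {S : Set G} (hS : S ⊆ 𝒜.units) :
    support (conv 𝒜.toGroupoidStruct m (conv 𝒜.toGroupoidStruct (S.indicator fun _ => 1) n))
      ⊆ 𝒜.units := by
  intro ζ hζ
  by_contra hζu
  set F := 𝒜.src '' (support m ∩ 𝒜.rng ⁻¹' {𝒜.rng ζ})
  have hF : F.Finite := (h.finiteRngFibers _).image _
  obtain ⟨V, hVc, hVo, hVu, hFV, hVF⟩ := 𝒜.exists_isCompact_isOpen (hF.inter_of_left S)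
    (hF.sdiff (t := S)) (inter_subset_right.trans hS) disjoint_sdiff_inter.symm
  have hzero : conv 𝒜.toGroupoidStruct m
      (conv 𝒜.toGroupoidStruct (V.indicator fun _ => 1) n) ζ = 0 := by
    by_contra hne
    exact hζu ((h.2.2.1 _ (indicator_mem_diagSet _ hVc hVo hVu)).1.2 hne)
  refine hζ ((conv_diag_conv_apply_congr (support_indicator_subset.trans hS)
    (support_indicator_subset.trans hVu) m n fun p hp hpζ => ?_).trans hzero)
  have hpF : 𝒜.src p ∈ F := ⟨p, ⟨hp, hpζ⟩, rfl⟩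
  by_cases hpS : 𝒜.src p ∈ S
  · rw [indicator_of_mem hpS, indicator_of_mem (hFV ⟨hpF, hpS⟩)]
  · rw [indicator_of_notMem hpS, indicator_of_notMem (disjoint_right.mp hVF ⟨hpF, hpS⟩)]

lemma support_conv_subset_units (h : IsNormaliser 𝒜.toGroupoidStruct R m n) :
    support (conv 𝒜.toGroupoidStruct m n) ⊆ 𝒜.units := by
  have hn : conv 𝒜.toGroupoidStruct (𝒜.units.indicator fun _ => (1 : R)) n = n := by
    funext η
    rw [diag_conv_apply support_indicator_subset, indicator_of_mem (𝒜.rng_mem_units η), one_mul]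
  simpa only [hn] using h.support_conv_indicator_conv_subset_units subset_rfl

lemma support_conv_delta_conv_subset_units (h : IsNormaliser 𝒜.toGroupoidStruct R m n)
    (hx : x ∈ 𝒜.units) :
    support (conv 𝒜.toGroupoidStruct m (conv 𝒜.toGroupoidStruct (delta R x) n)) ⊆ 𝒜.units :=
  h.support_conv_indicator_conv_subset_units (singleton_subset_iff.mpr hx)

variable [IsDomain R]

lemma conv_apply_src_eq_one (h : IsNormaliser 𝒜.toGroupoidStruct R m n) (hq : m q ≠ 0) :
    conv 𝒜.toGroupoidStruct n m (𝒜.src q) = 1 := by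
  have hmnm := congrFun h.2.2.2.1 q
  rw [conv_diag_apply h.swap.support_conv_subset_units] at hmnm
  exact (mul_eq_left₀ hq).mp hmnm

lemma conv_apply_rng_eq_one (h : IsNormaliser 𝒜.toGroupoidStruct R m n) (hq : m q ≠ 0) :
    conv 𝒜.toGroupoidStruct m n (𝒜.rng q) = 1 := by
  have hmnm := congrFun h.2.2.2.1 q
  rw [← conv_assoc h.finiteRngFibers h.swap.finiteRngFibers,
    diag_conv_apply h.support_conv_subset_units] at hmnm
  exact (mul_eq_right₀ hq).mp hmnm

lemma conv_delta_conv_apply_rng (h : IsNormaliser 𝒜.toGroupoidStruct R m n)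
    (hx : x ∈ 𝒜.units) (hq : m q ≠ 0) :
    conv 𝒜.toGroupoidStruct m (conv 𝒜.toGroupoidStruct (delta R x) n) (𝒜.rng q)
      = delta R x (𝒜.src q) := by
  have hm := h.finiteRngFibers
  have hassoc := congrFun (congrArg (conv 𝒜.toGroupoidStruct · m)
    (conv_assoc hm (finiteRngFibers_delta x) n).symm) q
  rw [conv_assoc (hm.conv (finiteRngFibers_delta x)) h.swap.finiteRngFibers,
    diag_conv_apply (h.support_conv_delta_conv_subset_units hx),
    conv_diag_apply h.swap.support_conv_subset_units, h.conv_apply_src_eq_one hq, mul_one,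
    conv_diag_apply (support_delta_subset_units hx), mul_comm] at hassoc
  exact mul_left_cancel₀ hq hassoc

lemma conv_delta_conv_apply_src (h : IsNormaliser 𝒜.toGroupoidStruct R m n)
    (hx : x ∈ 𝒜.units) (hq : m q ≠ 0) :
    conv 𝒜.toGroupoidStruct n (conv 𝒜.toGroupoidStruct (delta R x) m) (𝒜.src q)
      = delta R x (𝒜.rng q) := by
  have hassoc := congrFun
    (conv_assoc h.finiteRngFibers h.swap.finiteRngFibers
      (conv 𝒜.toGroupoidStruct (delta R x) m)).symm q
  rw [conv_diag_apply (h.swap.support_conv_delta_conv_subset_units hx),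
    diag_conv_apply h.support_conv_subset_units, h.conv_apply_rng_eq_one hq, one_mul,
    diag_conv_apply (support_delta_subset_units hx), mul_comm] at hassoc
  exact mul_right_cancel₀ hq hassoc

lemma src_eq_of_rng_eq (h : IsNormaliser 𝒜.toGroupoidStruct R m n) (hq : m q ≠ 0)
    (hq' : m q' ≠ 0) (hr : 𝒜.rng q = 𝒜.rng q') : 𝒜.src q = 𝒜.src q' := by
  have he := h.conv_delta_conv_apply_rng (𝒜.src_mem_units q) hq'
  rw [← hr, h.conv_delta_conv_apply_rng (𝒜.src_mem_units q) hq, delta_apply_self] at he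
  by_contra hne
  exact one_ne_zero (he.trans (delta_apply_of_ne (Ne.symm hne)))

lemma rng_eq_of_src_eq (h : IsNormaliser 𝒜.toGroupoidStruct R m n) (hq : m q ≠ 0)
    (hq' : m q' ≠ 0) (hs : 𝒜.src q = 𝒜.src q') : 𝒜.rng q = 𝒜.rng q' := by
  have he := h.conv_delta_conv_apply_src (𝒜.rng_mem_units q) hq'
  rw [← hs, h.conv_delta_conv_apply_src (𝒜.rng_mem_units q) hq, delta_apply_self] at he
  by_contra hne
  exact one_ne_zero (he.trans (delta_apply_of_ne (Ne.symm hne)))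

lemma inv_mem_support (h : IsNormaliser 𝒜.toGroupoidStruct R m n)
    (hinj : InjOn 𝒜.rng (support m)) (hq : m q ≠ 0) : n (𝒜.inv q) ≠ 0 := by
  have hx := 𝒜.src_mem_units q
  have he := h.conv_delta_conv_apply_rng hx hq
  rw [delta_apply_self] at he
  obtain ⟨p, hp, p', hp', hpp', hpq⟩ :=
    support_conv_subset _ _ (show _ ≠ (0 : R) from he ▸ one_ne_zero)
  have hrp : 𝒜.rng p = 𝒜.rng q := by
    rw [← 𝒜.rng_mul _ _ hpp', hpq, 𝒜.rng_rng]
  obtain rfl := hinj hp hq hrp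
  rw [mem_support, diag_conv_apply (support_delta_subset_units hx)] at hp'
  rw [← eq_inv_of_mul_eq_rng hpp' hpq]
  exact right_ne_zero_of_mul hp'

lemma isotropyLeft_conv_isotropyRight (h : IsNormaliser 𝒜.toGroupoidStruct R m n)
    (hq : m q ≠ 0) :
    conv 𝒜.toGroupoidStruct (𝒜.isotropyLeft m q) (𝒜.isotropyRight n q)
      = delta R (𝒜.src q) := by
  set u := 𝒜.src q
  have hu : u ∈ 𝒜.units := 𝒜.src_mem_units q
  have hm := h.finiteRngFibers
  have hn := h.swap.finiteRngFibers
  have hδ : ∀ t, 𝒜.FiniteRngFibers (delta R t) := finiteRngFibers_delta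
  rw [isotropyLeft, isotropyRight, conv_assoc (hδ _) (hm.conv (hδ u)), conv_assoc hm (hδ u),
    ← conv_assoc (hδ u) (hδ u), delta_conv_delta (hu.trans (rng_eq_self_of_mem_units hu).symm),
    mul_unit_of_src_eq hu, ← conv_assoc (hδ u) hn, ← conv_assoc hm ((hδ u).conv hn),
    delta_inv_conv_diag_conv_delta (h.support_conv_delta_conv_subset_units hu),
    h.conv_delta_conv_apply_rng hu hq, delta_apply_self, one_smul]

lemma isotropyRight_conv_isotropyLeft (h : IsNormaliser 𝒜.toGroupoidStruct R m n)
    (hq : m q ≠ 0) :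
    conv 𝒜.toGroupoidStruct (𝒜.isotropyRight n q) (𝒜.isotropyLeft m q)
      = delta R (𝒜.src q) := by
  set u := 𝒜.src q
  have hu : u ∈ 𝒜.units := 𝒜.src_mem_units q
  have hm := h.finiteRngFibers
  have hn := h.swap.finiteRngFibers
  have hδ : ∀ t, 𝒜.FiniteRngFibers (delta R t) := finiteRngFibers_delta
  rw [isotropyRight, isotropyLeft, conv_assoc (hδ u) (hn.conv (hδ q)), conv_assoc hn (hδ q),
    ← conv_assoc (hδ q) (hδ _), delta_conv_delta (𝒜.rng_inv q).symm, 𝒜.mul_inv,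
    ← conv_assoc (hδ _) hm, ← conv_assoc hn ((hδ _).conv hm),
    delta_conv_diag_conv_delta (h.swap.support_conv_delta_conv_subset_units (𝒜.rng_mem_units q))
      hu, h.conv_delta_conv_apply_src (𝒜.rng_mem_units q) hq, delta_apply_self, one_smul]

section Grading

variable {Γ : Type*} [Group Γ] {c : G → Γ} {g : Γ}

lemma eq_of_src_eq (hc : 𝒜.IsCocycle c) (h : IsNormaliser 𝒜.toGroupoidStruct R m n)
    (hm : InGrade c g m) (hn : InGrade c g⁻¹ n)
    (hnice : GroupRingNice 𝒜.toGroupoidStruct c (𝒜.src q) R)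
    (hq : m q ≠ 0) (hq' : m q' ≠ 0) (hs : 𝒜.src q = 𝒜.src q') : q = q' := by
  have hδ : ∀ t, 𝒜.FiniteRngFibers (delta R t) := finiteRngFibers_delta
  have hφ := support_isotropyLeft_subset hc hm (hm q hq)
  have hψ := support_isotropyRight_subset hc hn (hm q hq)
  obtain ⟨v, η, -, -, hφη⟩ := hnice.2 _ _
    (finite_support_of_subset_isoSet ((hδ _).conv (h.finiteRngFibers.conv (hδ _))) hφ)
    (finite_support_of_subset_isoSet ((hδ _).conv (h.swap.finiteRngFibers.conv (hδ _))) hψ)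
    hφ hψ (h.isotropyLeft_conv_isotropyRight hq) (h.isotropyRight_conv_isotropyLeft hq)
  have hsupp : ∀ p, 𝒜.rng p = 𝒜.rng q → 𝒜.src p = 𝒜.src q → m p ≠ 0 →
      𝒜.mul (𝒜.inv q) p = η := fun p hr hs hp => by
    have hne := isotropyLeft_apply_inv_mul (a := m) hr hs ▸ hp
    rw [isotropyLeft, hφη] at hne
    by_contra hpη
    exact hne (indicator_of_notMem (show _ ∉ ({η} : Set G) from hpη) _)
  have hr := h.rng_eq_of_src_eq hq hq' hs
  exact mul_left_cancel (𝒜.src_inv q) (by rw [𝒜.src_inv, hr])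
    ((hsupp q rfl rfl hq).trans (hsupp q' hr.symm hs.symm hq').symm)

lemma injOn_src (hc : 𝒜.IsCocycle c) (h : IsNormaliser 𝒜.toGroupoidStruct R m n)
    (hm : InGrade c g m) (hn : InGrade c g⁻¹ n) {X : Set G} (hX : 𝒜.units ⊆ closure X)
    (hnice : ∀ x ∈ X, GroupRingNice 𝒜.toGroupoidStruct c x R) : InjOn 𝒜.src (support m) := by
  intro q hq q' hq' hs
  by_contra hne
  obtain ⟨a, ha, b, hb, hab, hsab, haX⟩ :=
    𝒜.exists_ne_src_eq_mem h.1.1.isClopen_support.isOpen hX hq hq' hne hs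
  exact hab (h.eq_of_src_eq hc hm hn (hnice _ haX) ha hb hsab)

lemma injOn_rng (hc : 𝒜.IsCocycle c) (h : IsNormaliser 𝒜.toGroupoidStruct R m n)
    (hm : InGrade c g m) (hn : InGrade c g⁻¹ n) {X : Set G} (hX : 𝒜.units ⊆ closure X)
    (hnice : ∀ x ∈ X, GroupRingNice 𝒜.toGroupoidStruct c x R) : InjOn 𝒜.rng (support m) :=
  fun _ hq _ hq' hr => h.injOn_src hc hm hn hX hnice hq hq' (h.src_eq_of_rng_eq hq hq' hr)

end Grading

end IsNormaliser

theorem normaliser_support_bisection_general {G : Type*} [TopologicalSpace G] [T2Space G]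
    {R : Type*} [CommRing R] [IsDomain R] (𝒢 : AmpleGroupoid G)
    {Γ : Type*} [Group Γ] (c : G → Γ) (hc : 𝒢.toGroupoidStruct.IsCocycle c)
    (X : Set G)
    (hXdense : GroupoidStruct.units 𝒢.toGroupoidStruct ⊆ closure X)
    (hX : ∀ x ∈ X, GroupRingNice 𝒢.toGroupoidStruct c x R)
    (g : Γ) (m n : G → R)
    (hnorm : IsNormaliser 𝒢.toGroupoidStruct R m n)
    (hm : InGrade c g m) (hn : InGrade c g⁻¹ n) :
    IsCompact (Function.support m) ∧ IsOpen (Function.support m) ∧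
    𝒢.toGroupoidStruct.IsBisection (Function.support m) ∧
    (∀ η ∈ Function.support m, c η = g) ∧
    Function.support n = 𝒢.toGroupoidStruct.inv '' Function.support m := by
  have hm' : InGrade c g⁻¹⁻¹ m := by rwa [inv_inv]
  have hinj_m := hnorm.injOn_rng hc hm hn hXdense hX
  have hinj_n := hnorm.swap.injOn_rng hc hn hm' hXdense hX
  refine ⟨hnorm.1.2, hnorm.1.1.isClopen_support.isOpen,
    ⟨hnorm.injOn_src hc hm hn hXdense hX, hinj_m⟩, hm,
    Set.ext fun p => ⟨fun hp => ⟨𝒢.inv p, hnorm.swap.inv_mem_support hinj_n hp, 𝒢.inv_inv p⟩, ?_⟩⟩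
  rintro ⟨q, hq, rfl⟩
  exact hnorm.inv_mem_support hinj_m hq

/-- Under the hypothesis that there is a dense subset `X ⊆ G⁰` such that the group ring
`R(c⁻¹(e) ∩ G_x^x)` has no zero-divisors and only trivial units for all `x ∈ X`, if
`(m, n)` is a normaliser of `D_R(G)` with `m` of degree `g` and `n` of degree `g⁻¹`, then
`supp m` is a compact open bisection contained in `c⁻¹(g)` and `supp n = (supp m)⁻¹`. -/
theorem normaliser_support_bisection {G : Type*} [TopologicalSpace G] [T2Space G]
    {R : Type*} [CommRing R] [IsDomain R] (𝒢 : AmpleGroupoid G)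
    {Γ : Type*} [Group Γ] (c : G → Γ) (hc : 𝒢.toGroupoidStruct.IsCocycle c)
    (hcont : IsLocallyConstant c)
    (X : Set G) (hXsub : X ⊆ GroupoidStruct.units 𝒢.toGroupoidStruct)
    (hXdense : GroupoidStruct.units 𝒢.toGroupoidStruct ⊆ closure X)
    (hX : ∀ x ∈ X, GroupRingNice 𝒢.toGroupoidStruct c x R)
    (g : Γ) (m n : G → R)
    (hnorm : IsNormaliser 𝒢.toGroupoidStruct R m n)
    (hm : InGrade c g m) (hn : InGrade c g⁻¹ n) :
    IsCompact (Function.support m) ∧ IsOpen (Function.support m) ∧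
    𝒢.toGroupoidStruct.IsBisection (Function.support m) ∧
    (∀ η ∈ Function.support m, c η = g) ∧
    Function.support n = 𝒢.toGroupoidStruct.inv '' Function.support m :=
  normaliser_support_bisection_general 𝒢 c hc X hXdense hX g m n hnorm hm hn
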